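/- arXiv:1011.5780 — 3 statements merged into one kernel-verified Lean document; each statement's English description precedes it below -/
import Mathlib

section
/- Let V be a finite-dimensional real vector space, let 𝒞 be a collection of cones in V each containing 0, and let S be a closed convex subset of V. If C_S ⊆ ⋃_{Γ∈𝒞} C_Γ, then S = ⋂_{Γ∈𝒞} (S+Γ), where C_T = {λ ∈ V* : sup_{x∈T} λ(x) < ∞}. -/
open scoped Pointwise

/-- The support function `H_S(l) = sup_{x ∈ S} l x`, valued in the extended reals. -/
noncomputable def suppFn {V : Type*} (S : Set V) (l : V → ℝ) : EReal :=
  ⨆ x ∈ S, (l x : EReal)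

theorem stmt3 (V : Type*) [NormedAddCommGroup V] [NormedSpace ℝ V] [FiniteDimensional ℝ V]
    (𝒞 : Set (Set V))
    (hcone : ∀ Γ ∈ 𝒞, (0 : V) ∈ Γ ∧ ∀ r : ℝ, 0 < r → ∀ x ∈ Γ, r • x ∈ Γ)
    (S : Set V) (hScl : IsClosed S) (hScv : Convex ℝ S)
    (hsub : {l : V →ₗ[ℝ] ℝ | suppFn S ⇑l < ⊤} ⊆
      ⋃ Γ ∈ 𝒞, {l : V →ₗ[ℝ] ℝ | suppFn Γ ⇑l < ⊤}) :
    S = ⋂ Γ ∈ 𝒞, (S + Γ) := by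
  apply Set.Subset.antisymm
  · intro x hx
    simp only [Set.mem_iInter]
    intro Γ hΓ
    exact ⟨x, hx, 0, (hcone Γ hΓ).1, add_zero x⟩
  · intro x hx
    by_contra hxS
    obtain ⟨f, u, hfu, hux⟩ := geometric_hahn_banach_closed_point hScv hScl hxS
    have hfS : f.toLinearMap ∈ {l : V →ₗ[ℝ] ℝ | suppFn S ⇑l < ⊤} := by
      have h1 : suppFn S ⇑f ≤ (u : EReal) := by
        apply iSup₂_le
        intro y hy
        exact_mod_cast (hfu y hy).le
      exact lt_of_le_of_lt h1 (EReal.coe_lt_top u)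
    obtain ⟨Γ, hΓ, hΓfin⟩ := Set.mem_iUnion₂.1 (hsub hfS)
    have hΓfin' : suppFn Γ ⇑f < ⊤ := hΓfin
    have hneg : ∀ y ∈ Γ, f y ≤ 0 := by
      intro y hy
      by_contra h
      push_neg at h
      obtain ⟨M, hM, -⟩ := EReal.lt_iff_exists_real_btwn.1 hΓfin'
      set r := (|M| + 1) / f y with hr_def
      have hr : 0 < r := div_pos (by positivity) h
      have hmem := (hcone Γ hΓ).2 r hr y hy
      have hval : f (r • y) = |M| + 1 := by
        rw [map_smul, smul_eq_mul, hr_def]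
        field_simp
      have hle : ((|M| + 1 : ℝ) : EReal) ≤ suppFn Γ ⇑f := by
        rw [← hval]
        exact le_iSup₂ (f := fun z (_ : z ∈ Γ) => ((f z : ℝ) : EReal)) (r • y) hmem
      have := lt_of_le_of_lt hle hM
      rw [EReal.coe_lt_coe_iff] at this
      have : M ≤ |M| := le_abs_self M
      linarith
    have hxΓ : x ∈ S + Γ := by
      have := Set.mem_iInter.1 hx Γ
      exact Set.mem_iInter.1 this hΓ
    obtain ⟨s, hs, g, hg, rfl⟩ := hxΓ
    have h1 : f s < u := hfu s hs
    have h2 : f g ≤ 0 := hneg g hg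
    have h3 : f (s + g) = f s + f g := map_add f s g
    linarith
end

section
/- In ℝ³ let Γ₁ = {(x,0,z) : 0 ≤ x ≤ z}, Γ₂ = {(x,y,z) : 0 ≤ x ≤ z and x²/z ≤ y ≤ x (with the convention that for z = 0 the condition reads x = y = 0)}, and B = {(0,y,0) : −1/2 ≤ y ≤ 1/2}. Then for every t > 1 the point (t, 1/2, t²) lies in (B+Γ₁) ∩ (B+Γ₂), but there is no compact subset B′ of ℝ³ such that {(t, 1/2, t²) : t > 1} ⊆ B′ + (Γ₁ ∩ Γ₂). In particular, the intersection (B+Γ₁)∩(B+Γ₂) is not contained in B′ + (Γ₁∩Γ₂) for any compact B′. -/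
open scoped Pointwise

/-- The cone `Γ₁ = {(x,0,z) : 0 ≤ x ≤ z}` in `ℝ³`. -/
def coneGamma1 : Set (ℝ × ℝ × ℝ) := {p | 0 ≤ p.1 ∧ p.1 ≤ p.2.2 ∧ p.2.1 = 0}

/-- The cone `Γ₂ = {(x,y,z) : 0 ≤ x ≤ z, x²/z ≤ y ≤ x}` in `ℝ³` (for `z = 0` Lean's
convention `0/0 = 0` forces `x = y = 0`). -/
def coneGamma2 : Set (ℝ × ℝ × ℝ) :=
  {p | 0 ≤ p.1 ∧ p.1 ≤ p.2.2 ∧ p.1 ^ 2 / p.2.2 ≤ p.2.1 ∧ p.2.1 ≤ p.1}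

/-- The segment `B = {(0,y,0) : -1/2 ≤ y ≤ 1/2}` in `ℝ³`. -/
def segB : Set (ℝ × ℝ × ℝ) := {p | p.1 = 0 ∧ p.2.2 = 0 ∧ -(1/2) ≤ p.2.1 ∧ p.2.1 ≤ 1/2}

lemma inter_fst_eq_zero {p : ℝ × ℝ × ℝ} (hp : p ∈ coneGamma1 ∩ coneGamma2) : p.1 = 0 := by
  obtain ⟨⟨h0, hxz, hy0⟩, ⟨_, _, hlow, _⟩⟩ := hp
  by_contra hne
  have hx : 0 < p.1 := lt_of_le_of_ne h0 (Ne.symm hne)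
  have hz : 0 < p.2.2 := lt_of_lt_of_le hx hxz
  have : 0 < p.1 ^ 2 / p.2.2 := div_pos (by positivity) hz
  rw [hy0] at hlow
  linarith

lemma mem_curve (t : ℝ) (ht : 1 < t) :
    ((t, 1/2, t ^ 2) : ℝ × ℝ × ℝ) ∈ (segB + coneGamma1) ∩ (segB + coneGamma2) := by
  have ht0 : 0 < t := lt_trans one_pos ht
  have htt : t ≤ t ^ 2 := by nlinarith
  constructor
  · refine ⟨(0, 1/2, 0), ⟨rfl, rfl, by norm_num, le_refl _⟩, (t, 0, t ^ 2),
      ⟨le_of_lt ht0, htt, rfl⟩, ?_⟩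
    simp [Prod.ext_iff]
  · refine ⟨(0, -(1/2), 0), ⟨rfl, rfl, le_refl _, by norm_num⟩, (t, 1, t ^ 2),
      ⟨le_of_lt ht0, htt, ?_, le_of_lt ht⟩, ?_⟩
    · have : t ^ 2 / t ^ 2 = 1 := div_self (by positivity)
      simp [this]
    · simp [Prod.ext_iff]; ring

lemma no_compact (B' : Set (ℝ × ℝ × ℝ)) (hB : IsCompact B') :
    ¬ {p : ℝ × ℝ × ℝ | ∃ t : ℝ, 1 < t ∧ p = (t, 1/2, t ^ 2)} ⊆
        B' + (coneGamma1 ∩ coneGamma2) := by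
  intro hsub
  obtain ⟨C, hC⟩ := hB.isBounded.exists_norm_le
  set t := max C 1 + 1 with htdef
  have ht1 : 1 < t := by
    have := le_max_right C 1
    simp only [htdef]; linarith
  obtain ⟨b, hb, g, hg, heq⟩ := hsub ⟨t, ht1, rfl⟩
  have hg1 : g.1 = 0 := inter_fst_eq_zero hg
  have hfst : b.1 + g.1 = t := congrArg Prod.fst heq
  rw [hg1, add_zero] at hfst
  have hbn : ‖b‖ ≤ C := hC b hb
  have : |b.1| ≤ C := le_trans (norm_fst_le b) hbn
  have : b.1 ≤ C := le_trans (le_abs_self _) this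
  have := le_max_left C 1
  simp only [htdef] at hfst
  linarith

theorem stmt6 :
    (∀ t : ℝ, 1 < t →
      ((t, 1/2, t ^ 2) : ℝ × ℝ × ℝ) ∈ (segB + coneGamma1) ∩ (segB + coneGamma2)) ∧
    (¬ ∃ B' : Set (ℝ × ℝ × ℝ), IsCompact B' ∧
      {p : ℝ × ℝ × ℝ | ∃ t : ℝ, 1 < t ∧ p = (t, 1/2, t ^ 2)} ⊆
        B' + (coneGamma1 ∩ coneGamma2)) ∧
    (∀ B' : Set (ℝ × ℝ × ℝ), IsCompact B' →
      ¬ ((segB + coneGamma1) ∩ (segB + coneGamma2) ⊆ B' + (coneGamma1 ∩ coneGamma2))) := by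
  refine ⟨mem_curve, ?_, ?_⟩
  · rintro ⟨B', hB, hsub⟩
    exact no_compact B' hB hsub
  · intro B' hB hsub
    exact no_compact B' hB fun p ⟨t, ht, hp⟩ => hsub (hp ▸ mem_curve t ht)
end

section
/- Let V be a finite-dimensional real inner product space, S ⊆ V a closed convex subset, and u : V → ℂ a Schwartz function with supp(u) ⊆ S. Then for every ν ∈ V* with sup_{x∈S} (−ν)(x) < ∞ (i.e. ν ∈ −C_S), the function x ↦ e^{−ν(x)} u(x) is again a Schwartz function on V. -/
open Function Finset

lemma exp_comp_deriv_bound {V : Type*} [NormedAddCommGroup V] [InnerProductSpace ℝ V]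
    (L : V →L[ℝ] ℝ) (i : ℕ) (x : V) :
    ‖iteratedFDeriv ℝ i (fun x => Real.exp (L x)) x‖ ≤ Real.exp (L x) * ‖L‖ ^ i := by
  have h := L.iteratedFDeriv_comp_right (f := Real.exp) Real.contDiff_exp x (i := i) le_top
  have heq : (fun x => Real.exp (L x)) = Real.exp ∘ L := rfl
  rw [heq, h]
  calc ‖(iteratedFDeriv ℝ i Real.exp (L x)).compContinuousLinearMap fun _ => L‖
      ≤ ‖iteratedFDeriv ℝ i Real.exp (L x)‖ * ∏ _j : Fin i, ‖L‖ :=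
        ContinuousMultilinearMap.norm_compContinuousLinearMap_le _ _
    _ = Real.exp (L x) * ‖L‖ ^ i := by
        rw [norm_iteratedFDeriv_eq_norm_iteratedDeriv, iteratedDeriv_eq_iterate,
          Real.iter_deriv_exp]
        simp [Real.abs_exp]

theorem stmt7 (V : Type*) [NormedAddCommGroup V] [InnerProductSpace ℝ V]
    [FiniteDimensional ℝ V]
    (S : Set V) (hScl : IsClosed S) (hScv : Convex ℝ S)
    (u : SchwartzMap V ℂ) (hsupp : Function.support u ⊆ S)
    (ν : V →L[ℝ] ℝ) (hν : BddAbove ((fun x => -ν x) '' S)) :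
    ∃ g : SchwartzMap V ℂ, ∀ x, g x = Real.exp (-ν x) • u x := by
  obtain ⟨M, hM⟩ := hν
  have hMem : ∀ x ∈ S, -ν x ≤ M := fun x hx => hM ⟨x, hx, rfl⟩
  set L : V →L[ℝ] ℝ := -ν with hL
  have hLx : ∀ x, L x = -ν x := fun x => rfl
  set h : V → ℝ := fun x => Real.exp (L x) with hh
  have hhsmooth : ContDiff ℝ ((⊤ : ℕ∞) : WithTop ℕ∞) h := Real.contDiff_exp.comp L.contDiff
  set f : V → ℂ := fun x => h x • u x with hf
  have hfin : Function.support f ⊆ S := by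
    intro x hx
    apply hsupp
    intro hux
    apply hx
    simp [hf, hux]
  have htsupp : tsupport f ⊆ S := closure_minimal hfin hScl
  have hfsmooth : ContDiff ℝ ((⊤ : ℕ∞) : WithTop ℕ∞) f := hhsmooth.smul u.smooth'
  -- derivative bound for h on S
  have hhbound : ∀ i : ℕ, ∀ x ∈ S, ‖iteratedFDeriv ℝ i h x‖ ≤ Real.exp M * ‖L‖ ^ i := by
    intro i x hx
    refine (exp_comp_deriv_bound L i x).trans ?_
    exact mul_le_mul_of_nonneg_right (Real.exp_le_exp.2 (hMem x hx)) (by positivity)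
  refine ⟨⟨f, hfsmooth, ?_⟩, fun x => rfl⟩
  intro k n
  -- get decay constants for u
  choose C hCpos hC using fun i => u.decay k i
  refine ⟨∑ i ∈ Finset.range (n + 1),
    (n.choose i : ℝ) * (Real.exp M * ‖L‖ ^ i) * C (n - i), fun x => ?_⟩
  by_cases hxS : x ∈ S
  · calc ‖x‖ ^ k * ‖iteratedFDeriv ℝ n f x‖
        ≤ ‖x‖ ^ k * ∑ i ∈ Finset.range (n + 1),
            (n.choose i : ℝ) * ‖iteratedFDeriv ℝ i h x‖ * ‖iteratedFDeriv ℝ (n - i) (⇑u) x‖ := by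
          gcongr
          exact norm_iteratedFDeriv_smul_le hhsmooth u.smooth' x (by exact_mod_cast le_top)
      _ = ∑ i ∈ Finset.range (n + 1),
            (n.choose i : ℝ) * ‖iteratedFDeriv ℝ i h x‖ *
              (‖x‖ ^ k * ‖iteratedFDeriv ℝ (n - i) (⇑u) x‖) := by
          rw [Finset.mul_sum]; congr 1; ext i; ring
      _ ≤ ∑ i ∈ Finset.range (n + 1),
            (n.choose i : ℝ) * (Real.exp M * ‖L‖ ^ i) * C (n - i) := by
          apply Finset.sum_le_sum
          intro i _
          have h1 := hhbound i x hxS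
          have h2 := hC (n - i) x
          have h3 : (0:ℝ) ≤ ‖x‖ ^ k * ‖iteratedFDeriv ℝ (n - i) (⇑u) x‖ := by positivity
          have := mul_le_mul (mul_le_mul_of_nonneg_left h1 (by positivity : (0:ℝ) ≤ (n.choose i : ℝ)))
            h2 h3 (by positivity)
          exact this
  · have : iteratedFDeriv ℝ n f x = 0 := by
      by_contra hne
      exact hxS (htsupp (support_iteratedFDeriv_subset n (by simpa using hne)))
    rw [this]
    simp only [norm_zero, mul_zero]
    apply Finset.sum_nonneg
    intro i _
    have := (hCpos (n - i)).le
    positivity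
end
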